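/- For integers n, d, x, s for which G₄(n,d,x,s) is defined, W(G₄(n,d,x,s)) = W(B₂(n−1,d,x)) + (2+d)n − 2d² − 3d − 1 + 2s² − 2x, and consequently W(G₄(n,d,x−1,s)) − W(G₄(n,d,x,s)) = 4(x + 2d − 2) for x ≥ 2. -/

import Mathlib

/-- The Wiener index: sum of distances over unordered pairs of vertices. -/
noncomputable def wiener {V : Type*} [Fintype V] (G : SimpleGraph V) : ℕ :=
  (∑ u : V, ∑ v : V, G.dist u v) / 2

/-- Vertex set for a caterpillar with spine `u_{-d}, …, u_d` and `L i` leaves at `u_i`.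
`(0, i)` is the spine vertex `u_i`; `(j, i)` for `1 ≤ j ≤ L i` is the `j`-th leaf at `u_i`. -/
noncomputable def catVerts (d : ℤ) (L : ℤ → ℕ) : Finset (ℤ × ℤ) :=
  (Finset.Icc (-d) d).biUnion (fun i => (Finset.Icc (0:ℤ) (L i : ℤ)).image (fun j => (j, i)))

/-- The caterpillar graph with spine `u_{-d}, …, u_d` and `L i` leaves appended to `u_i`. -/
def caterpillar (d : ℤ) (L : ℤ → ℕ) : SimpleGraph ↥(catVerts d L) :=
  SimpleGraph.fromRel (fun a b =>
    (a.1.1 = 0 ∧ b.1.1 = 0 ∧ a.1.2 + 1 = b.1.2) ∨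
    (a.1.2 = b.1.2 ∧ a.1.1 = 0 ∧ b.1.1 ≠ 0))

/-- Leaf-count function of the caterpillar `B₁(n,d,x)`. -/
def B1L (n d x : ℤ) : ℤ → ℕ := fun i =>
  (if i = -d - 1 + x ∨ i = d + 1 - x then 1 else 0) +
  (if |i| ≤ (n - 2*d - 4)/2 then 1 else 0)

/-- The caterpillar `B₁(n,d,x)`. -/
noncomputable def B1 (n d x : ℤ) := caterpillar d (B1L n d x)

/-- Leaf-count function of the caterpillar `B₂(n,d,x)`. -/
def B2L (n d x : ℤ) : ℤ → ℕ := fun i =>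
  (if |i| ≤ d - 2 then 1 else 0) +
  (if |i| = d - 1 then x.toNat else 0) +
  (if |i| = d then ((n - 4*d - 2*x + 2)/2).toNat else 0)

/-- The caterpillar `B₂(n,d,x)`. -/
noncomputable def B2 (n d x : ℤ) := caterpillar d (B2L n d x)

/-- `G₁(n,d,x,s)`: `B₁(n−2,d,x)` with an extra leaf at `u_s` and at `u_d`. -/
noncomputable def G1 (n d x s : ℤ) :=
  caterpillar d (fun i => B1L (n-2) d x i + (if i = s then 1 else 0) + (if i = d then 1 else 0))

/-- `G₂(n,d,x,s)`: `B₂(n−2,d,x)` with an extra leaf at `u_s` and at `u_d`. -/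
noncomputable def G2 (n d x s : ℤ) :=
  caterpillar d (fun i => B2L (n-2) d x i + (if i = s then 1 else 0) + (if i = d then 1 else 0))

/-- `G₃(n,d,x,s)`: `B₁(n−1,d,x)` with an extra leaf at `u_s`. -/
noncomputable def G3 (n d x s : ℤ) :=
  caterpillar d (fun i => B1L (n-1) d x i + (if i = s then 1 else 0))

/-- `G₄(n,d,x,s)`: `B₂(n−1,d,x)` with an extra leaf at `u_s`. -/
noncomputable def G4 (n d x s : ℤ) :=
  caterpillar d (fun i => B2L (n-1) d x i + (if i = s then 1 else 0))

/-- The star on `n` vertices: vertex `0` adjacent to all others. -/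
def starGraph (n : ℕ) : SimpleGraph (Fin n) :=
  SimpleGraph.fromRel (fun a _ => a.val = 0)

/-!
In a caterpillar, the distance between `(j, i)` and `(j', i')` (leaf `j` at the spine vertex
`u_i`, `j = 0` being `u_i` itself) is `|i - i'|` plus one for each endpoint that is a leaf.
Hence attaching a leaf at the spine vertex `u_p` raises the Wiener index by the transmission
`σ(u_p)` of `u_p` plus the number of vertices. For `B₂(n-1,d,x)` and `|s| ≤ d - 2`, `σ(u_s)` is an
explicit polynomial in `n`, `d`, `x` and `s`, which gives the first formula.

Lowering `x` by one moves a leaf from `u_{d-1}` to `u_d` and one from `u_{-(d-1)}` to `u_{-d}`.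
Moving a leaf changes the Wiener index by the difference of the transmissions, and at the end of
the spine `σ(u_d) - σ(u_{d-1}) = |V| - 2 (ℓ(u_d) + 1)`, where `ℓ(u_d)` is the number of leaves
at `u_d`, since every vertex except those at `u_d` gets one step further away.
-/

open Finset

namespace SimpleGraph

variable {V : Type*} {G : SimpleGraph V}

theorem dist_eq_of_lipschitz_of_descent (f : V → V → ℕ) (hzero : ∀ u v, f u v = 0 ↔ u = v)
    (hlip : ∀ u w v, G.Adj u w → f u v ≤ f w v + 1)
    (hdesc : ∀ u v, u ≠ v → ∃ w, G.Adj u w ∧ f w v + 1 = f u v) (u v : V) :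
    G.dist u v = f u v := by
  have le_length : ∀ {u} (p : G.Walk u v), f u v ≤ p.length := by
    intro u p
    induction p with
    | nil => simp [(hzero _ _).2 rfl]
    | cons h q ih => simpa using (hlip _ _ _ h).trans (Nat.add_le_add_right ih 1)
  have exists_walk : ∀ k u, f u v = k → ∃ p : G.Walk u v, p.length = k := by
    intro k
    induction k with
    | zero => rintro u hu; obtain rfl := (hzero u v).1 hu; exact ⟨.nil, rfl⟩
    | succ k ih =>
      intro u hu
      obtain ⟨w, hadj, hw⟩ := hdesc u v fun h => by simp [(hzero u v).2 h] at hu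
      obtain ⟨p, hp⟩ := ih w (by omega)
      exact ⟨.cons hadj p, by simp [hp]⟩
  obtain ⟨p, hp⟩ := exists_walk _ u rfl
  obtain ⟨q, hq⟩ := Reachable.exists_walk_length_eq_dist ⟨p⟩
  exact le_antisymm (hp ▸ G.dist_le p) (hq ▸ le_length q)

end SimpleGraph

theorem Fintype.even_sum_sum_of_symm {α : Type*} [Fintype α] (f : α → α → ℕ)
    (hsymm : ∀ a b, f a b = f b a) (hdiag : ∀ a, f a a = 0) : Even (∑ a, ∑ b, f a b) := by
  rw [← ZMod.natCast_eq_zero_iff_even, ← Fintype.sum_prod_type']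
  push_cast
  refine sum_involution (fun p _ => p.swap) (fun p _ => ?_) (fun p _ hp => ?_)
    (fun _ _ => mem_univ _) (fun p _ => p.swap_swap)
  · rw [Prod.fst_swap, Prod.snd_swap, hsymm]
    exact CharTwo.add_self_eq_zero _
  · obtain ⟨a, b⟩ := p
    rintro h
    obtain rfl : b = a := congrArg Prod.fst h
    simp [hdiag] at hp

theorem two_mul_wiener {V : Type*} [Fintype V] (G : SimpleGraph V) :
    2 * wiener G = ∑ u, ∑ v, G.dist u v :=
  Nat.mul_div_cancel' <| even_iff_two_dvd.mp <|
    Fintype.even_sum_sum_of_symm _ (fun _ _ => G.dist_comm) fun _ => G.dist_self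

theorem Finset.sum_sum_insert_of_symm {α M : Type*} [DecidableEq α] [AddCommMonoid M]
    {s : Finset α} {a : α} (ha : a ∉ s) (f : α → α → M) (hsymm : ∀ p q, f p q = f q p)
    (hdiag : f a a = 0) :
    ∑ p ∈ insert a s, ∑ q ∈ insert a s, f p q
      = ∑ p ∈ s, ∑ q ∈ s, f p q + 2 • ∑ q ∈ s, f a q := by
  simp only [sum_insert ha, hdiag, zero_add, sum_add_distrib, two_nsmul]
  rw [sum_congr rfl fun q _ => hsymm q a]
  abel

lemma two_mul_sum_Icc_id (a : ℤ) {b : ℤ} (h : a ≤ b + 1) :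
    2 * ∑ i ∈ Icc a b, i = (b - a + 1) * (a + b) := by
  induction b, (show a - 1 ≤ b by omega) using Int.leInduction with
  | base => simp
  | succ b hb ih =>
    rw [← insert_Icc_right_eq_Icc_add_one (by omega), sum_insert (by simp), mul_add,
      ih (by omega)]
    ring

lemma sum_Icc_abs_sub {m s : ℤ} (hs : |s| ≤ m) :
    ∑ i ∈ Icc (-m) m, |s - i| = m * (m + 1) + s ^ 2 := by
  rw [abs_le] at hs
  have hsplit : Icc (-m) m = Icc (-m) s ∪ Icc (s + 1) m := by
    ext; simp only [mem_Icc, mem_union]; omega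
  have hdisj : Disjoint (Icc (-m) s) (Icc (s + 1) m) := by
    rw [disjoint_left]; simp only [mem_Icc]; omega
  have hleft : ∀ i ∈ Icc (-m) s, |s - i| = s - i := fun i hi =>
    abs_of_nonneg (by rw [mem_Icc] at hi; omega)
  have hright : ∀ i ∈ Icc (s + 1) m, |s - i| = i - s := fun i hi => by
    rw [abs_of_neg (by rw [mem_Icc] at hi; omega), neg_sub]
  have gl := two_mul_sum_Icc_id (-m) (b := s) (by omega)
  have gr := two_mul_sum_Icc_id (s + 1) (b := m) (by omega)
  rw [hsplit, sum_union hdisj, sum_congr rfl hleft, sum_congr rfl hright, sum_sub_distrib,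
    sum_sub_distrib, sum_const, sum_const, Int.card_Icc, Int.card_Icc, nsmul_eq_mul,
    nsmul_eq_mul, Int.toNat_of_nonneg (by omega), Int.toNat_of_nonneg (by omega)]
  linarith

lemma sum_Icc_ite_abs_le {M : Type*} [AddCommMonoid M] (f : ℤ → M) {c d : ℤ} (hcd : c ≤ d) :
    ∑ i ∈ Icc (-d) d, (if |i| ≤ c then f i else 0) = ∑ i ∈ Icc (-c) c, f i := by
  rw [← sum_filter]
  congr 1
  ext i
  simp only [mem_filter, mem_Icc, abs_le]
  omega

lemma sum_Icc_ite_abs_eq {M : Type*} [AddCommMonoid M] (f : ℤ → M) {c d : ℤ} (hc : 0 < c)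
    (hcd : c ≤ d) : ∑ i ∈ Icc (-d) d, (if |i| = c then f i else 0) = f c + f (-c) := by
  rw [← sum_filter, show (Icc (-d) d).filter (fun i => |i| = c) = {c, -c} by
    ext i; simp only [mem_filter, mem_Icc, mem_insert, mem_singleton, Int.abs_eq_natAbs]; omega]
  exact sum_pair (by omega)

section Caterpillar

variable {d : ℤ} {L : ℤ → ℕ}

lemma mem_catVerts {p : ℤ × ℤ} :
    p ∈ catVerts d L ↔ -d ≤ p.2 ∧ p.2 ≤ d ∧ 0 ≤ p.1 ∧ p.1 ≤ L p.2 := by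
  obtain ⟨j, i⟩ := p
  simp only [catVerts, mem_biUnion, mem_Icc, mem_image, Prod.mk.injEq]
  constructor
  · rintro ⟨i, hi, j, hj, rfl, rfl⟩
    exact ⟨hi.1, hi.2, hj⟩
  · rintro ⟨hi₁, hi₂, hj⟩
    exact ⟨i, ⟨hi₁, hi₂⟩, j, hj, rfl, rfl⟩

lemma caterpillar_adj_iff {u v : catVerts d L} :
    (caterpillar d L).Adj u v ↔ u.1 ≠ v.1 ∧
      ((u.1.1 = 0 ∧ v.1.1 = 0 ∧ (u.1.2 + 1 = v.1.2 ∨ v.1.2 + 1 = u.1.2)) ∨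
       (u.1.2 = v.1.2 ∧ (u.1.1 = 0 ∧ v.1.1 ≠ 0 ∨ v.1.1 = 0 ∧ u.1.1 ≠ 0))) := by
  rw [caterpillar, SimpleGraph.fromRel_adj, ne_eq, Subtype.ext_iff]
  tauto

def leafDepth (j : ℤ) : ℕ := if j = 0 then 0 else 1

def catDist (p q : ℤ × ℤ) : ℕ :=
  if p = q then 0 else (p.2 - q.2).natAbs + leafDepth p.1 + leafDepth q.1

lemma catDist_comm (p q : ℤ × ℤ) : catDist p q = catDist q p := by
  unfold catDist
  split_ifs <;> grind

lemma catDist_eq_zero_iff {p q : ℤ × ℤ} : catDist p q = 0 ↔ p = q := by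
  unfold catDist leafDepth
  split_ifs <;> grind

lemma catDist_le_of_adj {u w : catVerts d L} (h : (caterpillar d L).Adj u w) (q : ℤ × ℤ) :
    catDist u.1 q ≤ catDist w.1 q + 1 := by
  rw [caterpillar_adj_iff] at h
  unfold catDist leafDepth
  split_ifs <;> grind

lemma exists_adj_catDist_succ {u v : catVerts d L} (h : u ≠ v) :
    ∃ w, (caterpillar d L).Adj u w ∧ catDist w.1 v.1 + 1 = catDist u.1 v.1 := by
  obtain ⟨⟨j, i⟩, hu⟩ := u
  obtain ⟨⟨j', i'⟩, hv⟩ := v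
  have hu' := mem_catVerts.1 hu
  have hv' := mem_catVerts.1 hv
  simp only [ne_eq, Subtype.mk.injEq, Prod.mk.injEq] at h hu' hv'
  -- step to the spine, then along the spine towards `i'`, then to `v`
  obtain ⟨w, hw, rfl⟩ : ∃ w : ℤ × ℤ, w ∈ catVerts d L ∧ w =
      if j ≠ 0 then (0, i) else if i < i' then (0, i + 1) else if i' < i then (0, i - 1)
      else (j', i') :=
    ⟨_, mem_catVerts.2 (by split_ifs <;> simp <;> omega), rfl⟩
  refine ⟨⟨_, hw⟩, ?_, ?_⟩
  · rw [caterpillar_adj_iff]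
    split_ifs <;> simp <;> omega
  · simp only [catDist, leafDepth]
    split_ifs <;> simp_all <;> omega

lemma caterpillar_dist (u v : catVerts d L) : (caterpillar d L).dist u v = catDist u.1 v.1 :=
  SimpleGraph.dist_eq_of_lipschitz_of_descent (fun u v => catDist u.1 v.1)
    (fun _ _ => catDist_eq_zero_iff.trans Subtype.ext_iff.symm)
    (fun _ _ v h => catDist_le_of_adj h v.1) (fun _ _ h => exists_adj_catDist_succ h) u v

lemma sum_catVerts {M : Type*} [AddCommMonoid M] (g : ℤ × ℤ → M) :
    ∑ p ∈ catVerts d L, g p = ∑ i ∈ Icc (-d) d, ∑ j ∈ Icc 0 (L i : ℤ), g (j, i) := by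
  rw [catVerts, sum_biUnion]
  · exact sum_congr rfl fun i _ => sum_image fun _ _ _ _ h => congrArg Prod.fst h
  · intro i _ i' _ hne
    simp only [Function.onFun, disjoint_left, mem_image]
    rintro _ ⟨j, _, rfl⟩ ⟨j', _, h⟩
    exact hne (congrArg Prod.snd h).symm

lemma card_catVerts : #(catVerts d L) = ∑ i ∈ Icc (-d) d, (L i + 1) := by
  rw [card_eq_sum_ones, sum_catVerts]
  refine sum_congr rfl fun i _ => ?_
  rw [← card_eq_sum_ones, Int.card_Icc]
  omega

lemma sum_leafDepth (m : ℕ) : ∑ j ∈ Icc (0 : ℤ) m, leafDepth j = m := by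
  have hIcc : Icc (0 : ℤ) m = insert 0 (Icc 1 (m : ℤ)) := by
    ext; simp only [mem_insert, mem_Icc]; omega
  have hleaf : ∀ j ∈ Icc (1 : ℤ) m, leafDepth j = 1 := fun j hj => if_neg (by simp at hj; omega)
  rw [hIcc, sum_insert (by simp), sum_congr rfl hleaf]
  simp [leafDepth]

lemma two_mul_wiener_caterpillar :
    2 * wiener (caterpillar d L) = ∑ p ∈ catVerts d L, ∑ q ∈ catVerts d L, catDist p q := by
  simp only [two_mul_wiener, caterpillar_dist]
  rw [← sum_coe_sort (catVerts d L)]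
  exact sum_congr rfl fun p _ => sum_coe_sort (catVerts d L) (catDist p.1)

noncomputable def spineTransmission (d : ℤ) (L : ℤ → ℕ) (p : ℤ) : ℕ :=
  ∑ i ∈ Icc (-d) d, ((L i + 1) * (p - i).natAbs + L i)

lemma sum_catDist_spine (p : ℤ) :
    ∑ q ∈ catVerts d L, catDist (0, p) q = spineTransmission d L p := by
  rw [sum_catVerts, spineTransmission]
  refine sum_congr rfl fun i _ => ?_
  have hdist : ∀ j, catDist (0, p) (j, i) = (p - i).natAbs + leafDepth j := by
    intro j
    simp only [catDist, leafDepth]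
    split_ifs <;> simp_all
  simp only [hdist, sum_add_distrib, sum_const, smul_eq_mul, sum_leafDepth, Int.card_Icc]
  congr 2

def addLeaf (L : ℤ → ℕ) (p : ℤ) : ℤ → ℕ := fun i => L i + if i = p then 1 else 0

lemma addLeaf_of_ne {p i : ℤ} (h : i ≠ p) : addLeaf L p i = L i := by
  simp [addLeaf, h]

lemma addLeaf_comm (L : ℤ → ℕ) (p q : ℤ) :
    addLeaf (addLeaf L p) q = addLeaf (addLeaf L q) p := by
  funext i
  simp only [addLeaf]
  omega

lemma new_leaf_not_mem_catVerts (p : ℤ) : ((L p : ℤ) + 1, p) ∉ catVerts d L := by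
  simp [mem_catVerts]

lemma catVerts_addLeaf {p : ℤ} (hp : p ∈ Icc (-d) d) :
    catVerts d (addLeaf L p) = insert ((L p : ℤ) + 1, p) (catVerts d L) := by
  ext ⟨j, i⟩
  simp only [mem_Icc] at hp
  rcases eq_or_ne i p with rfl | hi
  · simp [mem_catVerts, addLeaf]
    omega
  · simp [mem_catVerts, addLeaf, hi]

lemma card_catVerts_addLeaf {p : ℤ} (hp : p ∈ Icc (-d) d) :
    #(catVerts d (addLeaf L p)) = #(catVerts d L) + 1 := by
  rw [catVerts_addLeaf hp, card_insert_of_notMem (new_leaf_not_mem_catVerts p)]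

lemma catDist_new_leaf {p : ℤ} {q : ℤ × ℤ} (hq : q ∈ catVerts d L) :
    catDist ((L p : ℤ) + 1, p) q = catDist (0, p) q + 1 := by
  obtain ⟨j, i⟩ := q
  have := mem_catVerts.1 hq
  simp only [catDist, leafDepth, Prod.mk.injEq] at this ⊢
  rcases eq_or_ne i p with rfl | hi <;> split_ifs <;> omega

theorem wiener_caterpillar_addLeaf {p : ℤ} (hp : p ∈ Icc (-d) d) :
    wiener (caterpillar d (addLeaf L p))
      = wiener (caterpillar d L) + spineTransmission d L p + #(catVerts d L) := by
  refine Nat.eq_of_mul_eq_mul_left two_pos ?_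
  rw [mul_add, mul_add, two_mul_wiener_caterpillar, two_mul_wiener_caterpillar,
    catVerts_addLeaf hp, sum_sum_insert_of_symm (new_leaf_not_mem_catVerts p) _ catDist_comm
      (catDist_eq_zero_iff.2 rfl),
    sum_congr rfl fun q hq => catDist_new_leaf hq, sum_add_distrib, sum_catDist_spine,
    card_eq_sum_ones, smul_eq_mul]
  ring

lemma spineTransmission_end_sub (hd : 0 ≤ d) {e e' : ℤ}
    (he : e = d ∧ e' = d - 1 ∨ e = -d ∧ e' = -(d - 1)) :
    (spineTransmission d L e : ℤ) - spineTransmission d L e'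
      = #(catVerts d L) - 2 * ((L e : ℤ) + 1) := by
  have hstep : ∀ i ∈ Icc (-d) d,
      ((L i : ℤ) + 1) * (e - i).natAbs + L i - (((L i : ℤ) + 1) * (e' - i).natAbs + L i)
        = ((L i : ℤ) + 1) - 2 * if i = e then (L i : ℤ) + 1 else 0 := by
    intro i hi
    rw [mem_Icc] at hi
    have : ((e - i).natAbs : ℤ) - (e' - i).natAbs = if i = e then -1 else 1 := by
      split_ifs <;> omega
    split_ifs at this ⊢ <;> linear_combination ((L i : ℤ) + 1) * this
  have he_mem : e ∈ Icc (-d) d := by rw [mem_Icc]; omega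
  simp only [spineTransmission, card_catVerts, Nat.cast_sum, Nat.cast_add, Nat.cast_mul,
    Nat.cast_one]
  rw [← sum_sub_distrib, sum_congr rfl hstep, sum_sub_distrib, ← mul_sum, sum_ite_eq' _ _ _,
    if_pos he_mem]

end Caterpillar

section B2

-- `r` is the number of leaves at each of `u_{±d}` in `B₂(m,d,y)`.
variable {m d y r : ℤ}

lemma cast_B2L (hm : m = 4 * d + 2 * y + 2 * r - 2) (hy : 0 ≤ y) (hr : 0 ≤ r) (i : ℤ) :
    (B2L m d y i : ℤ) = (if |i| ≤ d - 2 then 1 else 0) + (if |i| = d - 1 then y else 0)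
      + (if |i| = d then r else 0) := by
  have hr' : (m - 4 * d - 2 * y + 2) / 2 = r := by omega
  simp only [B2L, hr']
  push_cast [Int.toNat_of_nonneg hy, Int.toNat_of_nonneg hr]
  rfl

lemma card_catVerts_B2L (hd : 2 ≤ d) (hm : m = 4 * d + 2 * y + 2 * r - 2) (hy : 0 ≤ y)
    (hr : 0 ≤ r) : (#(catVerts d (B2L m d y)) : ℤ) = m := by
  rw [card_catVerts]
  push_cast
  simp only [cast_B2L hm hy hr, sum_add_distrib, sum_Icc_ite_abs_le _ (by omega : d - 2 ≤ d),
    sum_Icc_ite_abs_eq _ (by omega : 0 < d - 1) (by omega : d - 1 ≤ d),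
    sum_Icc_ite_abs_eq _ (by omega : 0 < d) le_rfl, sum_const, Int.card_Icc, nsmul_eq_mul]
  push_cast [Int.toNat_of_nonneg (by omega : 0 ≤ d - 2 + 1 - -(d - 2)),
    Int.toNat_of_nonneg (by omega : 0 ≤ d + 1 - -d)]
  linear_combination -hm

lemma spineTransmission_B2L {s : ℤ} (hs : |s| ≤ d - 2) (hm : m = 4 * d + 2 * y + 2 * r - 2)
    (hy : 0 ≤ y) (hr : 0 ≤ r) :
    (spineTransmission d (B2L m d y) s : ℤ)
      = (d + 1) * m - 2 * d ^ 2 - 2 * d + 1 + 2 * s ^ 2 - 2 * y := by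
  have hs' := abs_le.1 hs
  have hterm : ∀ i, ((B2L m d y i : ℤ) + 1) * |s - i| + B2L m d y i =
      |s - i| + (if |i| ≤ d - 2 then |s - i| + 1 else 0)
        + (if |i| = d - 1 then y * (|s - i| + 1) else 0)
        + (if |i| = d then r * (|s - i| + 1) else 0) := by
    intro i
    rw [cast_B2L hm hy hr]
    split_ifs <;> ring
  simp only [spineTransmission]
  push_cast
  simp only [hterm, sum_add_distrib, sum_Icc_ite_abs_le _ (by omega : d - 2 ≤ d),
    sum_Icc_ite_abs_eq _ (by omega : 0 < d - 1) (by omega : d - 1 ≤ d),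
    sum_Icc_ite_abs_eq _ (by omega : 0 < d) le_rfl, sum_const, Int.card_Icc, nsmul_eq_mul,
    sum_Icc_abs_sub hs, sum_Icc_abs_sub (hs.trans (by omega : d - 2 ≤ d))]
  rw [abs_of_nonpos (by omega : s - (d - 1) ≤ 0), abs_of_nonneg (by omega : 0 ≤ s - -(d - 1)),
    abs_of_nonpos (by omega : s - d ≤ 0), abs_of_nonneg (by omega : 0 ≤ s - -d),
    Int.toNat_of_nonneg (by omega : 0 ≤ d - 2 + 1 - -(d - 2))]
  linear_combination -(d + 1) * hm

lemma B2L_eq_addLeaf_addLeaf (hd : 2 ≤ d) (hy : 1 ≤ y) :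
    B2L m d y = addLeaf (addLeaf (B2L (m - 2) d (y - 1)) (-(d - 1))) (d - 1) := by
  funext i
  simp only [B2L, addLeaf, Int.abs_eq_natAbs]
  split_ifs <;> omega

lemma B2L_pred_eq_addLeaf_addLeaf (hd : 2 ≤ d) (hm : m = 4 * d + 2 * y + 2 * r - 2)
    (hr : 0 ≤ r) : B2L m d (y - 1) = addLeaf (addLeaf (B2L (m - 2) d (y - 1)) d) (-d) := by
  funext i
  simp only [B2L, addLeaf, Int.abs_eq_natAbs]
  split_ifs <;> omega

theorem wiener_B2_pred_sub (hd : 2 ≤ d) (hm : m = 4 * d + 2 * y + 2 * r - 2) (hy : 1 ≤ y)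
    (hr : 0 ≤ r) : (wiener (B2 m d (y - 1)) : ℤ) - wiener (B2 m d y) = 8 * d + 4 * y - 10 := by
  set K := B2L (m - 2) d (y - 1)
  have hK : m - 2 = 4 * d + 2 * (y - 1) + 2 * r - 2 := by rw [hm]; ring
  have hKcard : (#(catVerts d K) : ℤ) = m - 2 := card_catVerts_B2L hd hK (by omega) hr
  have hKend : ∀ e, |e| = d → (K e : ℤ) = r := fun e he => by
    rw [cast_B2L hK (by omega) hr, he]
    split_ifs <;> omega
  have mem : ∀ e, -d ≤ e → e ≤ d → e ∈ Icc (-d) d := fun _ h₁ h₂ => mem_Icc.2 ⟨h₁, h₂⟩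
  have hB2 : wiener (B2 m d y)
      = wiener (caterpillar d (addLeaf (addLeaf K (-(d - 1))) (d - 1))) := by
    rw [B2, B2L_eq_addLeaf_addLeaf hd hy]
  have hB2pred : wiener (B2 m d (y - 1))
      = wiener (caterpillar d (addLeaf (addLeaf K d) (-d))) := by
    rw [B2, B2L_pred_eq_addLeaf_addLeaf hd hm hr]
  -- both graphs are `K` plus two leaves; they are linked through `K` plus leaves at
  -- `u_{-(d-1)}` and `u_d`, reached from either side by moving one leaf
  have w1 := wiener_caterpillar_addLeaf (L := addLeaf K (-(d - 1)))
    (mem (d - 1) (by omega) (by omega))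
  have w2 := wiener_caterpillar_addLeaf (L := addLeaf K (-(d - 1))) (mem d (by omega) le_rfl)
  have w3 := wiener_caterpillar_addLeaf (L := addLeaf K d) (mem (-(d - 1)) (by omega) (by omega))
  have w4 := wiener_caterpillar_addLeaf (L := addLeaf K d) (mem (-d) le_rfl (by omega))
  rw [addLeaf_comm K] at w2
  have t1 := spineTransmission_end_sub (d := d) (L := addLeaf K (-(d - 1))) (by omega) (e := d)
    (e' := d - 1) (by simp)
  have t2 := spineTransmission_end_sub (d := d) (L := addLeaf K d) (by omega) (e := -d)
    (e' := -(d - 1)) (by simp)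
  rw [card_catVerts_addLeaf (mem _ (by omega) (by omega))] at w1 w2 t1
  rw [card_catVerts_addLeaf (mem _ (by omega) (by omega))] at w3 w4 t2
  rw [addLeaf_of_ne (by omega), hKend d (abs_of_nonneg (by omega))] at t1
  rw [addLeaf_of_ne (by omega), hKend (-d) (by rw [abs_neg, abs_of_nonneg (by omega)])] at t2
  rw [hB2, hB2pred]
  zify at w1 w2 w3 w4
  push_cast at t1 t2
  linear_combination w4 - w3 + w2 - w1 + t1 + t2 + 2 * hKcard + 2 * hm

theorem wiener_G4_eq_wiener_B2_add {n d x r s : ℤ} (hs : |s| ≤ d - 2)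
    (hn : n - 1 = 4 * d + 2 * x + 2 * r - 2) (hx : 0 ≤ x) (hr : 0 ≤ r) :
    (wiener (G4 n d x s) : ℤ)
      = wiener (B2 (n - 1) d x) + (2 + d) * n - 2 * d ^ 2 - 3 * d - 1 + 2 * s ^ 2 - 2 * x := by
  have hs' := abs_le.1 hs
  have hG4 : wiener (G4 n d x s) = wiener (caterpillar d (addLeaf (B2L (n - 1) d x) s)) := rfl
  have h := wiener_caterpillar_addLeaf (d := d) (L := B2L (n - 1) d x) (p := s)
    (mem_Icc.2 ⟨by omega, by omega⟩)
  zify at h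
  rw [hG4, B2, h, spineTransmission_B2L hs hn hx hr, card_catVerts_B2L (by omega) hn hx hr]
  ring

end B2

theorem wiener_G4_general (n d x s : ℤ) (hno : Odd n) (hd1 : 4 ≤ d)
    (hx1 : 1 ≤ x) (hx2 : 2 * x ≤ (n - 1) - 4 * d + 2)
    (hs : s ∈ ({0, 1} : Set ℤ)) :
    (wiener (G4 n d x s) : ℚ)
      = (wiener (B2 (n - 1) d x) : ℚ) + (2 + (d:ℚ)) * (n : ℚ)
        - 2 * (d:ℚ)^2 - 3 * (d:ℚ) - 1 + 2 * (s:ℚ)^2 - 2 * (x:ℚ) ∧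
    (2 ≤ x →
      (wiener (G4 n d (x - 1) s) : ℤ) - (wiener (G4 n d x s) : ℤ)
        = 4 * (x + 2 * d - 2)) := by
  obtain ⟨k, rfl⟩ := hno
  have hs' : |s| ≤ d - 2 := by
    rcases hs with rfl | rfl <;> simp <;> omega
  refine ⟨?_, fun hx => ?_⟩
  · exact_mod_cast wiener_G4_eq_wiener_B2_add hs' (n := 2 * k + 1) (x := x)
      (r := k - 2 * d - x + 1) (by ring) (by omega) (by omega)
  · rw [wiener_G4_eq_wiener_B2_add hs' (n := 2 * k + 1) (x := x - 1) (r := k - 2 * d - x + 2)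
        (by ring) (by omega) (by omega),
      wiener_G4_eq_wiener_B2_add hs' (n := 2 * k + 1) (x := x) (r := k - 2 * d - x + 1)
        (by ring) (by omega) (by omega)]
    linear_combination wiener_B2_pred_sub (m := 2 * k + 1 - 1) (d := d) (y := x)
      (r := k - 2 * d - x + 1) (by omega) (by ring) (by omega) (by omega)

/-- `W(G₄(n,d,x,s)) = W(B₂(n−1,d,x)) + (2+d)n − 2d² − 3d − 1 + 2s² − 2x`,
and consequently `W(G₄(n,d,x−1,s)) − W(G₄(n,d,x,s)) = 4(x + 2d − 2)` for `x ≥ 2`. -/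
theorem wiener_G4 (n d x s : ℤ) (hno : Odd n) (hn : 19 ≤ n)
    (hd1 : 4 ≤ d) (hd2 : 4 * d ≤ n - 1)
    (hx1 : 1 ≤ x) (hx2 : 2 * x ≤ (n - 1) - 4 * d + 2)
    (hs : s ∈ ({0, 1} : Set ℤ)) :
    (wiener (G4 n d x s) : ℚ)
      = (wiener (B2 (n - 1) d x) : ℚ) + (2 + (d:ℚ)) * (n : ℚ)
        - 2 * (d:ℚ)^2 - 3 * (d:ℚ) - 1 + 2 * (s:ℚ)^2 - 2 * (x:ℚ) ∧
    (2 ≤ x →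
      (wiener (G4 n d (x - 1) s) : ℤ) - (wiener (G4 n d x s) : ℤ)
        = 4 * (x + 2 * d - 2)) :=
  wiener_G4_general n d x s hno hd1 hx1 hx2 hs
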